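/- Let α, β be real numbers with 0 ≤ α ≤ β and let f : [0,1] → ℝ be continuous. Then the sequence of Bernstein-Stancu polynomials (B_n^{α,β}(f;·))_{n ∈ ℕ} converges uniformly to f on [0,1]; that is, for every ε > 0 there exists N such that for all n ≥ N and all x ∈ [0,1], |B_n^{α,β}(f;x) − f(x)| ≤ ε. -/

import Mathlib

/-!
The nodes `(k + α) / (n + β)` of `B_n^{α,β}` lie in `[0, 1]` and within `β / n` of the nodes
`k / n` of the classical Bernstein operator `B_n = B_n^{0,0}`. Since the basis polynomials form a
partition of unity, uniform continuity of `f` makes `B_n^{α,β} f - B_n f` uniformly small, and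
`B_n f → f` uniformly by Bernstein's proof of the Weierstrass theorem.
-/

/-- Bernstein basis polynomial `b_{n,k}(x) = (n choose k) x^k (1-x)^(n-k)`. -/
noncomputable def bernsteinBasis (n k : ℕ) (x : ℝ) : ℝ :=
  (n.choose k : ℝ) * x ^ k * (1 - x) ^ (n - k)

/-- Bernstein-Stancu operator `B_n^{α,β}(f;x)`. -/
noncomputable def bernsteinStancu (n : ℕ) (α β : ℝ) (f : ℝ → ℝ) (x : ℝ) : ℝ :=
  ∑ k ∈ Finset.range (n + 1), bernsteinBasis n k x * f (((k : ℝ) + α) / ((n : ℝ) + β))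

open Finset Filter Set unitInterval

lemma bernsteinBasis_eq_bernstein (n k : ℕ) (x : I) :
    bernsteinBasis n k x = bernstein n k x := by
  rw [bernstein_apply, bernsteinBasis]

lemma abs_sum_bernsteinBasis_mul_le {n : ℕ} {x η : ℝ} (hx : x ∈ I) {g : ℕ → ℝ}
    (hg : ∀ k ≤ n, |g k| ≤ η) :
    |∑ k ∈ range (n + 1), bernsteinBasis n k x * g k| ≤ η := by
  lift x to I using hx
  calc |∑ k ∈ range (n + 1), bernsteinBasis n k x * g k|
      ≤ ∑ k ∈ range (n + 1), bernsteinBasis n k x * η := by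
        refine (abs_sum_le_sum_abs _ _).trans (sum_le_sum fun k hk => ?_)
        rw [abs_mul, bernsteinBasis_eq_bernstein, abs_of_nonneg bernstein_nonneg]
        exact mul_le_mul_of_nonneg_left (hg k (Nat.lt_succ_iff.mp (mem_range.mp hk)))
          bernstein_nonneg
    _ = η := by
        simp_rw [← sum_mul, bernsteinBasis_eq_bernstein, ← Fin.sum_univ_eq_sum_range
          (fun k => bernstein n k x), bernstein.probability, one_mul]

lemma stancuNode_mem_Icc {n k : ℕ} {α β : ℝ} (hα : 0 ≤ α) (hαβ : α ≤ β) (hk : k ≤ n) :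
    ((k : ℝ) + α) / ((n : ℝ) + β) ∈ I := by
  have hk' : (k : ℝ) ≤ n := by exact_mod_cast hk
  have hβ := hα.trans hαβ
  exact ⟨by positivity, div_le_one_of_le₀ (by linarith) (by positivity)⟩

lemma abs_stancuNode_sub_le {n k : ℕ} {α β : ℝ} (hα : 0 ≤ α) (hαβ : α ≤ β) (hk : k ≤ n)
    (hn : 0 < n) :
    |((k : ℝ) + α) / ((n : ℝ) + β) - k / n| ≤ β / n := by
  have hk' : (k : ℝ) ≤ n := by exact_mod_cast hk
  have hn' : (0 : ℝ) < n := by exact_mod_cast hn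
  have hnβ : (0 : ℝ) < n + β := by linarith
  rw [div_sub_div _ _ hnβ.ne' hn'.ne', abs_div, abs_of_pos (mul_pos hnβ hn'),
    div_le_div_iff₀ (mul_pos hnβ hn') hn']
  have hβ := hα.trans hαβ
  have hnum : |((k : ℝ) + α) * n - (n + β) * k| ≤ β * n :=
    abs_le.2 ⟨by nlinarith [mul_le_mul_of_nonneg_left hk' hβ], by nlinarith⟩
  nlinarith [mul_le_mul_of_nonneg_right hnum hn'.le, mul_nonneg (mul_nonneg hβ hβ) hn'.le]

theorem tendstoUniformlyOn_bernsteinStancu_zero_zero {f : ℝ → ℝ} (hf : ContinuousOn f I) :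
    TendstoUniformlyOn (fun n => bernsteinStancu n 0 0 f) f atTop I := by
  have h := bernsteinApproximation_uniform ⟨_, hf.domRestrict⟩
  rw [ContinuousMap.tendsto_iff_tendstoUniformly] at h
  rw [tendstoUniformlyOn_iff_tendstoUniformly_comp_coe]
  convert h using 2 with n
  · ext x
    simp only [bernsteinApproximation.apply, bernsteinStancu, add_zero, smul_eq_mul,
      bernsteinBasis_eq_bernstein]
    exact (Fin.sum_univ_eq_sum_range (fun k => bernstein n k x * f (k / n)) _).symm
  · rfl

theorem tendstoUniformlyOn_bernsteinStancu_sub_zero_zero {α β : ℝ} (hα : 0 ≤ α) (hαβ : α ≤ β)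
    {f : ℝ → ℝ} (hf : UniformContinuousOn f I) :
    TendstoUniformlyOn (fun n x => bernsteinStancu n α β f x - bernsteinStancu n 0 0 f x) 0
      atTop I := by
  rw [Metric.tendstoUniformlyOn_iff]
  intro ε hε
  obtain ⟨δ, hδ, hfδ⟩ := Metric.uniformContinuousOn_iff.1 hf (ε / 2) (half_pos hε)
  filter_upwards [(tendsto_const_div_atTop_nhds_zero_nat β).eventually (gt_mem_nhds hδ),
    eventually_gt_atTop 0] with n hβn hn x hx
  rw [Pi.zero_apply, dist_zero_left, Real.norm_eq_abs, bernsteinStancu, bernsteinStancu,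
    ← sum_sub_distrib]
  simp_rw [← mul_sub, add_zero]
  refine (abs_sum_bernsteinBasis_mul_le hx fun k hk => ?_).trans_lt (half_lt_self hε)
  have hnode₀ := stancuNode_mem_Icc (le_refl 0) (le_refl 0) hk
  rw [add_zero, add_zero] at hnode₀
  exact (hfδ _ (stancuNode_mem_Icc hα hαβ hk) _ hnode₀
    ((abs_stancuNode_sub_le hα hαβ hk hn).trans_lt hβn)).le

theorem stancu_uniform_convergence (α β : ℝ) (hα : 0 ≤ α) (hαβ : α ≤ β)
    (f : ℝ → ℝ) (hf : ContinuousOn f (Set.Icc 0 1)) :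
    ∀ ε > (0 : ℝ), ∃ N : ℕ, ∀ n : ℕ, N ≤ n → ∀ x ∈ Set.Icc (0 : ℝ) 1,
      |bernsteinStancu n α β f x - f x| ≤ ε := by
  have h := (tendstoUniformlyOn_bernsteinStancu_zero_zero hf).add
    (tendstoUniformlyOn_bernsteinStancu_sub_zero_zero hα hαβ
      (isCompact_Icc.uniformContinuousOn_of_continuous hf))
  simp only [add_zero] at h
  intro ε hε
  obtain ⟨N, hN⟩ := eventually_atTop.1 (Metric.tendstoUniformlyOn_iff.1 h ε hε)
  exact ⟨N, fun n hn x hx => by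
    simpa [Real.dist_eq, abs_sub_comm] using (hN n hn x hx).le⟩
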